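/- Let G be a cycle graph with vertices alternately colored black and white, and suppose each vertex carries an input in {0,1,2} and a decision in {0,1}, where the inputs are determined by a walk through all 9 input edges (the subdivided input complex restricted to a cycle through the edges (W,0)-(B,1), (B,1)-(W,2), (W,2)-(B,2), (B,2)-(W,0) etc.). Then the equality negation condition (adjacent vertices decide equally iff their inputs differ) cannot hold on all edges of any subdivision of this cycle. -/

import Mathlib

/-!
Each decision flips across an edge exactly when the two inputs agree, so going once around
the cycle the decision flips as many times as there are equal-input edges. These are the `m`
edges of the subdivided (W,2)–(B,2) segment, and `m` is odd, so the decision cannot return to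
its starting value.
-/

/-- Inputs along the closed walk (W,0) → (B,1) → (W,2) → (B,2) → (W,0) through the
subdivided input graph, where each of the four input edges is subdivided into `m` edges
(`m` odd), vertices alternate colors (position `t` has color W if `t` is even, B if odd),
and each subdivision vertex inherits the input of the original endpoint of its color.
Positions `2m ≤ t ≤ 3m` form the equal-input segment (both inputs `2`). -/
def walkInput (m t : ℕ) : Fin 3 :=
  if t ≤ m then (if Even t then 0 else 1)
  else if t ≤ 2 * m then (if Even t then 2 else 1)
  else if t ≤ 3 * m then 2
  else if Even t then 0 else 2

open Finset

lemma Fin.two_eq_iff_ne_of_ne {a b : Fin 2} (h : a ≠ b) (c : Fin 2) : b = c ↔ a ≠ c := by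
  revert a b c; decide

lemma apply_eq_apply_zero_iff_even_card_ne_succ (d : ℕ → Fin 2) (n : ℕ) :
    d n = d 0 ↔ Even #{t ∈ range n | d t ≠ d (t + 1)} := by
  induction n with
  | zero => simp
  | succ n ih =>
    rw [range_add_one, filter_insert]
    by_cases hflip : d n = d (n + 1)
    · simp [hflip, ← ih]
    · rw [if_pos hflip, card_insert_of_notMem (by simp), Nat.even_add_one, ← ih,
        Fin.two_eq_iff_ne_of_ne hflip]

-- Oddness of `m` puts the junctions at `t = m` and `t = 3 * m` on black vertices, so the
-- equal-input edges are exactly those of the third segment.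
lemma walkInput_eq_succ_iff {m t : ℕ} (hm : Odd m) (ht : t < 4 * m) :
    walkInput m t = walkInput m (t + 1) ↔ 2 * m ≤ t ∧ t < 3 * m := by
  unfold walkInput
  split_ifs <;> grind

/-- on the closed walk (W,0) → (B,1) → (W,2) → (B,2) → (W,0), suitably
subdivided (each segment into an odd number `m` of edges, so colors alternate), the
equality negation constraint — adjacent vertices decide equally iff their inputs differ —
cannot hold on all edges: no decision assignment `d` is consistent around the cycle. -/
theorem eqneg_cycle_inconsistent (m : ℕ) (hm : Odd m) :
    ¬ ∃ d : ℕ → Fin 2,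
      d (4 * m) = d 0 ∧
      ∀ t < 4 * m, (walkInput m t = walkInput m (t + 1) ↔ d t ≠ d (t + 1)) := by
  rintro ⟨d, hcycle, hcons⟩
  have hflips : {t ∈ range (4 * m) | d t ≠ d (t + 1)} = Ico (2 * m) (3 * m) := by
    ext t
    simp only [mem_filter, mem_range, mem_Ico]
    constructor
    · rintro ⟨ht, hflip⟩
      exact (walkInput_eq_succ_iff hm ht).1 ((hcons t ht).2 hflip)
    · rintro hseg
      have ht : t < 4 * m := by omega
      exact ⟨ht, (hcons t ht).1 ((walkInput_eq_succ_iff hm ht).2 hseg)⟩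
  have heven := (apply_eq_apply_zero_iff_even_card_ne_succ d (4 * m)).1 hcycle
  rw [hflips, Nat.card_Ico, show 3 * m - 2 * m = m by omega] at heven
  exact Nat.not_even_iff_odd.2 hm heven
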